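/- For the prime p = 353942783, the representation 353942783 = 2·3 + (1 + 2^2·3^2)·(2 + 3^4·(1 + 2·3^10)) holds, and consequently ‖353942783‖ ≤ 5 + 58 = 63. -/

import Mathlib

/-- `IsSumProduct k n` means the positive integer `n` can be written as a
sum-product expression using exactly `k` ones, additions, multiplications
and parentheses. -/
inductive IsSumProduct : ℕ → ℕ → Prop
  | one : IsSumProduct 1 1
  | add {j k a b : ℕ} : IsSumProduct j a → IsSumProduct k b →
      IsSumProduct (j + k) (a + b)
  | mul {j k a b : ℕ} : IsSumProduct j a → IsSumProduct k b →
      IsSumProduct (j + k) (a * b)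

/-- The complexity `‖n‖` of a positive integer `n`: the least number of 1's
needed to express `n` using only 1's, addition, multiplication and
parentheses. -/
noncomputable def complexity (n : ℕ) : ℕ := sInf {k | IsSumProduct k n}

namespace IsSumProduct

theorem two : IsSumProduct 2 2 := add one one

theorem three : IsSumProduct 3 3 := add two one

theorem pow {k a : ℕ} (h : IsSumProduct k a) (m : ℕ) (hm : 1 ≤ m := by norm_num) :
    IsSumProduct (m * k) (a ^ m) := by
  induction m, hm using Nat.le_induction with
  | base => simpa using h
  | succ m _ ih => simpa [pow_succ, add_mul] using mul ih h

end IsSumProduct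

theorem complexity_le_of_isSumProduct {k n : ℕ} (h : IsSumProduct k n) : complexity n ≤ k :=
  Nat.sInf_le h

theorem prime_353942783_representation :
    (353942783 : ℕ) = 2 * 3 + (1 + 2 ^ 2 * 3 ^ 2) * (2 + 3 ^ 4 * (1 + 2 * 3 ^ 10)) ∧
    complexity 353942783 ≤ 63 := by
  have hrepr : (353942783 : ℕ) = 2 * 3 + (1 + 2 ^ 2 * 3 ^ 2) * (2 + 3 ^ 4 * (1 + 2 * 3 ^ 10)) := by
    norm_num
  -- 1's used: 5 for 2·3, 11 for 1 + 2²·3², and 2 + 12 + (1 + 2 + 30) = 47 for the last factor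
  have hexpr : IsSumProduct 63 (2 * 3 + (1 + 2 ^ 2 * 3 ^ 2) * (2 + 3 ^ 4 * (1 + 2 * 3 ^ 10))) :=
    open IsSumProduct in
    add (mul two three)
      (mul (add one (mul (two.pow 2) (three.pow 2)))
        (add two (mul (three.pow 4) (add one (mul two (three.pow 10))))))
  exact ⟨hrepr, hrepr ▸ complexity_le_of_isSumProduct hexpr⟩
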